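/- arXiv:2204.11691 — 2 statements merged into one kernel-verified Lean document; each statement's English description precedes it below -/
import Mathlib

section
/- The equilibrium of the fluid model of the Tangle under a tips inflation attack with constant arrival rate β is given by x̂ = hβ/(pk−1), l̂ = pkhβ/(pk−1), ŵ = (pk−1)⁻¹(pkh−h)β, provided pk ≠ 1. That is, these values satisfy 0 = 1 − pk·x̂/l̂ and l̂ − x̂ = βpkh·x̂/l̂. -/
/-! Since `l̂ = pk · x̂` with `x̂ ≠ 0`, the fraction of honest tips at equilibrium is `x̂ / l̂ = (pk)⁻¹`,
which is exactly the balance `0 = 1 - pk · x̂ / l̂`. The gap `l̂ - x̂ = (pk - 1) x̂` is then `hβ`,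
the amount `βpkh · x̂ / l̂` of honest work in flight during one delay. -/

theorem tangle_attack_equilibrium_general (h β p k : ℝ)
    (hh : 0 < h) (hβ : 0 < β)
    (hpkne : p * k ≠ 1) (hpk0 : p * k ≠ 0) :
    let xhat := h * β / (p * k - 1)
    let lhat := p * k * h * β / (p * k - 1)
    let what := (p * k - 1)⁻¹ * (p * k * h - h) * β
    (0 = 1 - p * k * (xhat / lhat)) ∧ (lhat - xhat = β * p * k * h * (xhat / lhat)) ∧ what = lhat - xhat := by
  intro xhat lhat what
  have hpk1 : p * k - 1 ≠ 0 := sub_ne_zero.mpr hpkne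
  have hl : lhat = p * k * xhat := by simp only [lhat, xhat, mul_assoc, mul_div_assoc]
  have hx : xhat ≠ 0 := div_ne_zero (mul_ne_zero hh.ne' hβ.ne') hpk1
  have hratio : xhat / lhat = (p * k)⁻¹ := by rw [hl, div_mul_cancel_right₀ hx]
  have hgap : lhat - xhat = h * β := by
    rw [hl, ← sub_one_mul]
    exact mul_div_cancel₀ _ hpk1
  refine ⟨?_, ?_, ?_⟩
  · rw [hratio, mul_inv_cancel₀ hpk0, sub_self]
  · rw [hratio, hgap, show β * p * k * h = h * β * (p * k) by ring, mul_inv_cancel_right₀ hpk0]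
  · simp only [what, lhat, xhat]
    ring

/-- Equilibrium of the fluid model of the Tangle under a tips inflation attack. -/
theorem tangle_attack_equilibrium (h β p k : ℝ)
    (hh : 0 < h) (hβ : 0 < β) (hp0 : 0 ≤ p) (hp1 : p ≤ 1) (hk : 0 < k)
    (hpkne : p * k ≠ 1) (hpk0 : p * k ≠ 0) :
    let xhat := h * β / (p * k - 1)
    let lhat := p * k * h * β / (p * k - 1)
    let what := (p * k - 1)⁻¹ * (p * k * h - h) * β
    (0 = 1 - p * k * (xhat / lhat)) ∧ (lhat - xhat = β * p * k * h * (xhat / lhat)) ∧ what = lhat - xhat :=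
  tangle_attack_equilibrium_general h β p k hh hβ hpkne hpk0
end

section
/- Let 0 < p < 1, m > 0, and K = 3pm + 1 − 2p + √((2p − 1 − pm)² + 4pm). Then K > 0, and the values l̃ = Kβh/(2pm), x̃ = Kβh/(pm(4p − 4pm + K)), k̃ = K/(2p) + 2 − 2m satisfy the equilibrium conditions of the controlled fluid model: p·k̃·x̃/l̃ = 1, l̃ − x̃ = βh (from w̃ = pβhk̃x̃/l̃ = βh), and k̃ = 2 + (m/(βh))(l̃ − 2βh). -/
/-!
The gain `K` is the larger root of `K² - 2(3pm + 1 - 2p)K + 8p²m(m - 1) = 0`, which is exactly the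
condition `l̃ - x̃ = βh` once `l̃` and `x̃` are written in terms of `K`. The flow balance and the
control law are then identities in `K`; the only inequality needed is `4pm < K` (from `p < 1`),
which makes the threshold `l̃ - 2βh` of the control law nonnegative.
-/

noncomputable def equilibriumGain (p m : ℝ) : ℝ :=
  3 * p * m + 1 - 2 * p + √((2 * p - 1 - p * m) ^ 2 + 4 * p * m)

section Gain

variable {p m : ℝ}

theorem equilibriumGain_quadratic (hpm : 0 ≤ p * m) :
    equilibriumGain p m ^ 2 - 2 * (3 * p * m + 1 - 2 * p) * equilibriumGain p m
      + 8 * p ^ 2 * m * (m - 1) = 0 := by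
  have hs : √((2 * p - 1 - p * m) ^ 2 + 4 * p * m) ^ 2 = (2 * p - 1 - p * m) ^ 2 + 4 * p * m :=
    Real.sq_sqrt (add_nonneg (sq_nonneg _) (by linarith))
  unfold equilibriumGain
  linear_combination hs

theorem four_mul_lt_equilibriumGain (hpm : 0 < p * m) (hp1 : p < 1) :
    4 * p * m < equilibriumGain p m := by
  set c := 2 * p - 1 - p * m
  have hs : √(c ^ 2 + 4 * p * m) ^ 2 = c ^ 2 + 4 * p * m :=
    Real.sq_sqrt (add_nonneg (sq_nonneg _) (by linarith))
  -- `√(c² + 4pm) > c + 2pm` because `c² + 4pm - (c + 2pm)² = 8pm(1 - p) > 0`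
  have key : c + 2 * p * m < √(c ^ 2 + 4 * p * m) := by
    rcases lt_or_ge (c + 2 * p * m) 0 with hneg | hnonneg
    · exact hneg.trans_le (Real.sqrt_nonneg _)
    · refine lt_of_pow_lt_pow_left₀ 2 (Real.sqrt_nonneg _) ?_
      rw [hs]
      nlinarith [mul_pos hpm (sub_pos.mpr hp1)]
  unfold equilibriumGain
  linarith

end Gain

section Equilibrium

variable {p m β h K : ℝ}

theorem flow_balance_at_equilibrium (hp : p ≠ 0) (hm : m ≠ 0) (hβ : β ≠ 0) (hh : h ≠ 0)
    (hK : K ≠ 0) (hD : 4 * p - 4 * p * m + K ≠ 0) :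
    p * (K / (2 * p) + 2 - 2 * m) * (K * β * h / (p * m * (4 * p - 4 * p * m + K)))
      / (K * β * h / (2 * p * m)) = 1 := by
  have hk : p * (K / (2 * p) + 2 - 2 * m) = (4 * p - 4 * p * m + K) / 2 := by
    field_simp
    ring
  rw [hk]
  set D := 4 * p - 4 * p * m + K
  field_simp

theorem window_gap_at_equilibrium (hp : p ≠ 0) (hm : m ≠ 0)
    (hD : 4 * p - 4 * p * m + K ≠ 0)
    (hK : K ^ 2 - 2 * (3 * p * m + 1 - 2 * p) * K + 8 * p ^ 2 * m * (m - 1) = 0) :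
    K * β * h / (2 * p * m) - K * β * h / (p * m * (4 * p - 4 * p * m + K)) = β * h := by
  rw [div_sub_div _ _ (by simp [*]) (by simp [*]), div_eq_iff (by simp [*])]
  linear_combination p * m * β * h * hK

theorem control_law_at_equilibrium (hp : 0 < p) (hm : 0 < m) (hβh : 0 < β * h)
    (hK : 4 * p * m ≤ K) :
    K / (2 * p) + 2 - 2 * m
      = 2 + (m / (β * h)) * max (K * β * h / (2 * p * m) - 2 * β * h) 0 := by
  have hgap :
      K * β * h / (2 * p * m) - 2 * β * h = β * h * ((K - 4 * p * m) / (2 * p * m)) := by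
    field_simp
    ring
  have hgap_nonneg : 0 ≤ (K - 4 * p * m) / (2 * p * m) := by
    have := sub_nonneg.mpr hK
    positivity
  rw [hgap, max_eq_left (mul_nonneg hβh.le hgap_nonneg), ← mul_assoc, div_mul_cancel₀ m hβh.ne']
  field_simp
  ring

end Equilibrium

/-- Under attack (p < 1), the controlled fluid model has the equilibrium
ltil = Kβh/(2pm), xtil = Kβh/(pm(4p − 4pm + K)), ktil = K/(2p) + 2 − 2m, where
K = 3pm + 1 − 2p + √((2p − 1 − pm)² + 4pm). -/
theorem controlled_equilibrium (p m β h : ℝ)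
    (hp0 : 0 < p) (hp1 : p < 1) (hm : 0 < m) (hβ : 0 < β) (hh : 0 < h) :
    let K : ℝ := 3 * p * m + 1 - 2 * p + Real.sqrt ((2 * p - 1 - p * m) ^ 2 + 4 * p * m)
    let ltil : ℝ := K * β * h / (2 * p * m)
    let xtil : ℝ := K * β * h / (p * m * (4 * p - 4 * p * m + K))
    let ktil : ℝ := K / (2 * p) + 2 - 2 * m
    0 < K ∧
    p * ktil * xtil / ltil = 1 ∧
    ltil - xtil = β * h ∧
    ktil = 2 + (m / (β * h)) * max (ltil - 2 * β * h) 0 := by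
  intro K ltil xtil ktil
  have hpm : 0 < p * m := mul_pos hp0 hm
  have hK : 4 * p * m < K := four_mul_lt_equilibriumGain hpm hp1
  have hKpos : 0 < K := by linarith
  have hD : 0 < 4 * p - 4 * p * m + K := by linarith
  exact ⟨hKpos,
    flow_balance_at_equilibrium hp0.ne' hm.ne' hβ.ne' hh.ne' hKpos.ne' hD.ne',
    window_gap_at_equilibrium hp0.ne' hm.ne' hD.ne' (equilibriumGain_quadratic hpm.le),
    control_law_at_equilibrium hp0 hm (mul_pos hβ hh) hK.le⟩
end
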